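/- arXiv:2312.11696 — 2 statements merged into one kernel-verified Lean document; each statement's English description precedes it below -/
import Mathlib

section
/- For every natural number n and every integer j ≥ 0, the Fibonacci digit-shift satisfies (n+1) ⊙ φ^j − n ⊙ φ^j = F^(j−|n|); that is, the difference equals F^j if the zeroth Zeckendorf digit of n is 0, and equals F^(j−1) if it is 1. -/
open Finset

/-- `F m` denotes `F^m := F_{m+2}`, the Fibonacci numbers with shifted index,
so `F^{-2} = 0`, `F^{-1} = 1`, `F^0 = 1`, `F^1 = 2`, … (and `F^m = 0` for `m < -2`). -/
def F (m : ℤ) : ℕ := Nat.fib (m + 2).toNat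

lemma F_pos (m : ℤ) (h : -2 < m) : 0 < F m := Nat.fib_pos.mpr (by omega)

/-- The set of indices of the `1` digits in the (unique) Zeckendorf representation
`n = ∑_{j ∈ zeckSet n} F^j` (no two consecutive indices), computed greedily. -/
def zeckSet : ℕ → Finset ℕ
  | 0 => ∅
  | (n + 1) =>
      insert (Nat.findGreatest (fun i => F i ≤ n + 1) (n + 1))
        (zeckSet (n + 1 - F (Nat.findGreatest (fun i => F i ≤ n + 1) (n + 1))))
decreasing_by exact Nat.sub_lt (Nat.succ_pos n) (F_pos _ (by omega))

/-- The golden ratio `φ = (1 + √5)/2`. -/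
noncomputable def phi : ℝ := (1 + Real.sqrt 5) / 2

/-- `|n|`, the zeroth Zeckendorf digit of `n`. -/
def zd0 (n : ℕ) : ℕ := if 0 ∈ zeckSet n then 1 else 0

/-- `n‾ = ∑_j d_j φ^j`, the `n`-th whole number in base `φ`. -/
noncomputable def zbar (n : ℕ) : ℝ := ∑ j ∈ zeckSet n, phi ^ j

/-- `n ⊙ φ^k = ∑_j d_j F^{j+k}`, the Zeckendorf digit shift. -/
def zshift (n : ℕ) (k : ℤ) : ℕ := ∑ j ∈ zeckSet n, F (j + k)

/-!
Write `n > 0` greedily as `n = F^g + m` with `m < F^{g-1}`; then the digits of `n` are those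
of `m` together with `g`, so `n ⊙ φ^k = F^{g+k} + m ⊙ φ^k` and `|n| = |m|` once `g ≥ 1`.
Likewise `(n + 1) ⊙ φ^k = F^{g+k} + (m + 1) ⊙ φ^k`: directly when `m + 1 < F^{g-1}`, and through
the carry `n + 1 = F^{g+1}` and the recurrence `F^{g+1+k} = F^{g+k} + F^{g-1+k}` when
`m + 1 = F^{g-1}`. Strong induction on `n` therefore reduces the claim for `n` to the claim for `m`.
-/

open Nat

lemma F_natCast (g : ℕ) : F g = fib (g + 2) := rfl

lemma F_mono : Monotone F := fun _ _ h => fib_mono (by omega)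

lemma F_add_one {a : ℤ} (ha : -1 ≤ a) : F (a + 1) = F a + F (a - 1) := by
  obtain ⟨t, rfl⟩ : ∃ t : ℕ, a = t - 1 := ⟨(a + 1).toNat, by omega⟩
  simp only [F, show (t - 1 + 1 + 2 : ℤ).toNat = t + 2 by omega,
    show (t - 1 + 2 : ℤ).toNat = t + 1 by omega, show (t - 1 - 1 + 2 : ℤ).toNat = t by omega,
    fib_add_two]
  ring

lemma F_lt_F_iff {g h : ℕ} : F g < F h ↔ g < h := fib_add_two_strictMono.lt_iff_lt

lemma lt_F_self (g : ℕ) : g < F g := by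
  have := le_fib_add_one (g + 2)
  rw [F_natCast]
  omega

lemma F_le_of_mem_zeckSet {n i : ℕ} (hi : i ∈ zeckSet n) : F i ≤ n := by
  induction n using Nat.strong_induction_on generalizing i with
  | _ n ih =>
    cases n with
    | zero => simp [zeckSet] at hi
    | succ n =>
      rw [zeckSet, mem_insert] at hi
      rcases hi with rfl | hi
      · exact Nat.findGreatest_spec (P := fun i => F i ≤ n + 1) (zero_le _) (by simp [F])
      · exact (ih _ (Nat.sub_lt (succ_pos n) (F_pos _ (by omega))) hi).trans (Nat.sub_le _ _)

lemma lt_of_mem_zeckSet {n g i : ℕ} (hn : n < F g) (hi : i ∈ zeckSet n) : i < g :=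
  F_lt_F_iff.1 ((F_le_of_mem_zeckSet hi).trans_lt hn)

lemma findGreatest_F_le_eq {n g : ℕ} (hle : F g ≤ n) (hlt : n < F (g + 1 : ℕ)) :
    Nat.findGreatest (fun i => F i ≤ n) n = g :=
  Nat.findGreatest_eq_iff.2 ⟨(lt_F_self g).le.trans hle, fun _ => hle,
    fun _ hk _ hFk => (hlt.trans_le (F_mono (by exact_mod_cast hk))).not_ge hFk⟩

lemma zeckSet_F_add {g m : ℕ} (hm : m < F ((g : ℤ) - 1)) :
    zeckSet (F g + m) = insert g (zeckSet m) := by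
  have hrec : F (g + 1 : ℕ) = F g + F ((g : ℤ) - 1) := by
    push_cast; exact F_add_one (by omega)
  have hpos := F_pos g (by omega)
  obtain ⟨N, hN⟩ : ∃ N, F g + m = N + 1 := ⟨F g + m - 1, by omega⟩
  rw [hN, zeckSet, ← hN, findGreatest_F_le_eq (g := g) (by omega) (by omega),
    Nat.add_sub_cancel_left]

lemma not_mem_zeckSet_of_lt_F {g m : ℕ} (hm : m < F ((g : ℤ) - 1)) : g ∉ zeckSet m :=
  fun hg => (lt_of_mem_zeckSet (hm.trans_le (F_mono (by omega))) hg).false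

lemma zshift_F_add {g m : ℕ} (hm : m < F ((g : ℤ) - 1)) (k : ℤ) :
    zshift (F g + m) k = F (g + k) + zshift m k := by
  rw [zshift, zeckSet_F_add hm, sum_insert (not_mem_zeckSet_of_lt_F hm), zshift]

lemma zd0_F_add {g m : ℕ} (hg : g ≠ 0) (hm : m < F ((g : ℤ) - 1)) :
    zd0 (F g + m) = zd0 m := by
  simp only [zd0, zeckSet_F_add hm, mem_insert, hg.symm, false_or]

lemma zeckSet_F (g : ℕ) : zeckSet (F g) = {g} := by
  simpa [zeckSet] using zeckSet_F_add (m := 0) (F_pos _ (by omega))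

lemma zshift_F (g : ℕ) (k : ℤ) : zshift (F g) k = F (g + k) := by
  simp [zshift, zeckSet_F]

lemma exists_F_add_of_pos {n : ℕ} (hn : 0 < n) :
    ∃ g m : ℕ, n = F g + m ∧ m < F ((g : ℤ) - 1) := by
  obtain ⟨g, hg⟩ : ∃ g, greatestFib n = g + 2 :=
    ⟨greatestFib n - 2, by have := le_greatestFib.2 (show fib 2 ≤ n by rwa [fib_two]); omega⟩
  have hle : fib (g + 2) ≤ n := hg ▸ fib_greatestFib_le n
  have hlt : n < fib (g + 3) := by simpa [hg] using lt_fib_greatestFib_add_one n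
  have hrec : fib (g + 3) = fib (g + 1) + fib (g + 2) := fib_add_two
  have hF : F ((g : ℤ) - 1) = fib (g + 1) := by simp only [F]; congr 1; omega
  exact ⟨g, n - F g, by rw [F_natCast]; omega, by rw [hF, F_natCast]; omega⟩

lemma zshift_F_add_succ {g m : ℕ} (hg : g ≠ 0) (hm : m < F ((g : ℤ) - 1)) {k : ℤ}
    (hk : -2 ≤ k) :
    zshift (F g + m + 1) k = F (g + k) + zshift (m + 1) k := by
  rcases lt_or_eq_of_le (show m + 1 ≤ _ from hm) with hm' | hm'
  · exact zshift_F_add hm' k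
  · obtain ⟨h, rfl⟩ : ∃ h, g = h + 1 := ⟨g - 1, by omega⟩
    push_cast at hm'
    rw [add_sub_cancel_right] at hm'
    have hrec : F (h + 1 + 1 : ℕ) = F (h + 1 : ℕ) + F h := by
      push_cast; simpa using F_add_one (a := (h : ℤ) + 1) (by omega)
    rw [add_assoc, hm', ← hrec, zshift_F, zshift_F]
    push_cast
    simpa [add_right_comm] using F_add_one (a := (h : ℤ) + 1 + k) (by omega)

theorem zshift_succ (n : ℕ) {k : ℤ} (hk : -1 ≤ k) :
    zshift (n + 1) k = zshift n k + F (k - zd0 n) := by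
  induction n using Nat.strong_induction_on with
  | _ n ih =>
    rcases n.eq_zero_or_pos with rfl | hn
    · have h1 : zshift 1 k = F k := by simpa [show F 0 = 1 from rfl] using zshift_F 0 k
      rw [zero_add, h1]
      simp [zshift, zd0, zeckSet]
    obtain ⟨g, m, rfl, hm⟩ := exists_F_add_of_pos hn
    rcases eq_or_ne g 0 with rfl | hg
    · obtain rfl : m = 0 := by simpa [F] using hm
      change zshift (F (1 : ℕ)) k = zshift (F (0 : ℕ)) k + F (k - zd0 (F (0 : ℕ)))
      rw [zshift_F, zshift_F, zd0, zeckSet_F]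
      simpa [add_comm] using F_add_one hk
    · rw [zshift_F_add_succ hg hm (by omega), zshift_F_add hm, zd0_F_add hg hm,
        ih m (by have := F_pos g (by omega); omega)]
      ring

/-- For every `n` and every integer `j ≥ 0`,
`(n+1) ⊙ φ^j − n ⊙ φ^j = F^(j−|n|)`. -/
theorem statement1 (n j : ℕ) :
    (zshift (n + 1) (j : ℤ) : ℤ) - (zshift n (j : ℤ) : ℤ) =
      (F ((j : ℤ) - (zd0 n : ℤ)) : ℤ) := by
  rw [zshift_succ n (by omega)]
  push_cast
  ring
end

section
/- Let m ∈ ℕ₀ and let 0 ≤ a < F^m have Zeckendorf digits d_1 = d_0 = 0. Then, as subsets of ℝ: (i) I_0(a;m) = I_0(a⊙φ; m+1) ∪ I_1(a⊙φ; m+1), i.e. [a‾/φ^m, (a+1)‾/φ^m) = [(a⊙φ)‾/φ^(m+1), (a⊙φ+1)‾/φ^(m+1)) ∪ [(a⊙φ+1)‾/φ^(m+1), (a⊙φ+2)‾/φ^(m+1)); (ii) I_1(a;m) = I_2(a⊙φ; m+1), i.e. [(a+1)‾/φ^m, (a+2)‾/φ^m) = [(a⊙φ+2)‾/φ^(m+1),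 (a⊙φ+3)‾/φ^(m+1)); and (iii) if moreover d_2 = 0 and a+3 ≤ F^m, then I_2(a;m) = I_1(a⊙φ^(−1); m−1) = I_0(a⊙φ+3; m+1) ∪ I_1(a⊙φ+3; m+1). -/
open Finset

/-!
Both `S ↦ ∑_{j ∈ S} F^j` and `S ↦ ∑_{j ∈ S} φ^j` are unchanged by the carry `{j, j+1} ↦ {j+2}`,
and carries turn any finite `S ⊆ ℕ` into a set without consecutive elements, which is the digit
set of its `F`-sum by uniqueness of the Zeckendorf representation. Hence
`(∑_{j ∈ S} F^j)‾ = ∑_{j ∈ S} φ^j` for every finite `S`, consecutive digits allowed.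
When the digits of `a` are at least `2` (at least `3` in (iii)), each of `a + c`, `a ⊙ φ + c`
and `a ⊙ φ^(-1) + c` occurring in the statement is such a sum, so `(a + 1)‾ = a‾ + 1`,
`(a ⊙ φ)‾ = φ a‾`, `(a ⊙ φ + 5)‾ = φ a‾ + φ³`, and so on; every claimed equality of intervals
then comes down to `φ² = φ + 1`.
-/

lemma F_natCast_s5 (i : ℕ) : F i = Nat.fib (i + 2) := by
  simp [F, show ((i : ℤ) + 2).toNat = i + 2 by omega]

lemma F_add_two (i : ℕ) : F (i + 2 : ℕ) = F i + F (i + 1 : ℕ) := by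
  simp only [F_natCast_s5, Nat.fib_add_two]

def Nonconsecutive (S : Finset ℕ) : Prop := ∀ j ∈ S, j + 1 ∉ S

lemma exists_nonconsecutive_sum_eq (S : Finset ℕ) :
    ∃ T, Nonconsecutive T ∧ ∀ f : ℕ → ℝ, (∀ i, f (i + 2) = f i + f (i + 1)) →
      ∑ j ∈ T, f j = ∑ j ∈ S, f j := by
  induction hn : S.card using Nat.strong_induction_on generalizing S with
  | _ n ih =>
  by_cases hS : Nonconsecutive S
  · exact ⟨S, hS, fun _ _ => rfl⟩
  have hne : (S.filter (· + 1 ∈ S)).Nonempty := by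
    simp only [Nonconsecutive, not_forall, not_not] at hS
    obtain ⟨j, hj, hj1⟩ := hS
    exact ⟨j, mem_filter.2 ⟨hj, hj1⟩⟩
  -- carry at the largest consecutive pair `{j, j + 1}`, so that `j + 2` is free
  obtain ⟨j, hjS, hjmax⟩ := (S.filter (· + 1 ∈ S)).exists_max_image id hne
  obtain ⟨hj, hj1⟩ := mem_filter.1 hjS
  have hj2 : j + 2 ∉ (S.erase j).erase (j + 1) := fun h => by
    have : j + 1 ≤ j :=
      hjmax (j + 1) (mem_filter.2 ⟨hj1, mem_of_mem_erase (mem_of_mem_erase h)⟩)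
    omega
  have hcard : (insert (j + 2) ((S.erase j).erase (j + 1))).card < n := by
    have h1 := card_erase_lt_of_mem (mem_erase.2 ⟨(by omega : j + 1 ≠ j), hj1⟩)
    have h2 := card_erase_lt_of_mem hj
    rw [card_insert_of_notMem hj2]
    omega
  obtain ⟨T, hT, hsum⟩ := ih _ hcard _ rfl
  refine ⟨T, hT, fun f hf => ?_⟩
  rw [hsum f hf, sum_insert hj2, hf, ← add_sum_erase S f hj,
    ← add_sum_erase (S.erase j) f (mem_erase.2 ⟨by omega, hj1⟩), add_assoc]

lemma two_le_greatestFib {N : ℕ} (hN : N ≠ 0) : 2 ≤ Nat.greatestFib N :=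
  Nat.le_greatestFib.2 (Nat.one_le_iff_ne_zero.2 hN)

lemma findGreatest_F_le_eq_s5 {N : ℕ} (hN : N ≠ 0) :
    Nat.findGreatest (fun i => F i ≤ N) N = Nat.greatestFib N - 2 := by
  have h2 := two_le_greatestFib hN
  have hF (i : ℕ) : F i ≤ N ↔ i + 2 ≤ Nat.greatestFib N := by
    rw [F_natCast_s5, Nat.le_greatestFib]
  refine Nat.findGreatest_eq_iff.2 ⟨?_, fun _ => (hF _).2 (by omega), fun i hi _ => ?_⟩
  · have := Nat.findGreatest_le (P := fun k => Nat.fib k ≤ N) (N + 1)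
    unfold Nat.greatestFib at h2 ⊢
    omega
  · rw [hF]
    omega

lemma zeckSet_eq_map_zeckendorf (n : ℕ) :
    zeckSet n = ((Nat.zeckendorf n).map (· - 2)).toFinset := by
  induction n using Nat.strong_induction_on with
  | _ n ih =>
  rcases n with _ | n
  · simp [zeckSet]
  have h2 := two_le_greatestFib n.add_one_ne_zero
  rw [zeckSet, findGreatest_F_le_eq_s5 n.add_one_ne_zero, Nat.zeckendorf_succ, List.map_cons,
    List.toFinset_cons, F_natCast_s5, Nat.sub_add_cancel h2,
    ih _ (Nat.sub_lt n.succ_pos (Nat.fib_pos.2 (by omega)))]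

lemma isZeckendorfRep_sort {S : Finset ℕ} (hS : Nonconsecutive S) :
    ((S.sort (· ≥ ·)).map (· + 2)).IsZeckendorfRep := by
  refine List.Pairwise.isChain (List.pairwise_append.2 ⟨?_, by simp, by simp⟩)
  refine List.pairwise_map.2 ((S.pairwise_sort (· ≥ ·)).and (S.sort_nodup _) |>.imp_of_mem ?_)
  intro a b ha hb ⟨hab, hne⟩
  have := hS b ((S.mem_sort _).1 hb)
  have : a ≠ b + 1 := fun h => this (h ▸ (S.mem_sort _).1 ha)
  omega

lemma zeckSet_sum_F {S : Finset ℕ} (hS : Nonconsecutive S) : zeckSet (∑ j ∈ S, F j) = S := by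
  have hsum : ∑ j ∈ S, F j = (((S.sort (· ≥ ·)).map (· + 2)).map Nat.fib).sum := by
    rw [← S.sort_toFinset (· ≥ ·), List.sum_toFinset _ (S.sort_nodup _), List.map_map,
      S.sort_toFinset]
    simp [Function.comp_def, F_natCast_s5]
  rw [hsum, zeckSet_eq_map_zeckendorf, Nat.zeckendorf_sum_fib (isZeckendorfRep_sort hS),
    List.map_map]
  simp [Function.comp_def]

lemma sum_zeckSet_F (n : ℕ) : ∑ j ∈ zeckSet n, F j = n := by
  induction n using Nat.strong_induction_on with
  | _ n ih =>
  rcases n with _ | n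
  · simp [zeckSet]
  rw [zeckSet, findGreatest_F_le_eq_s5 n.add_one_ne_zero]
  set g := Nat.greatestFib (n + 1)
  have h2 : 2 ≤ g := two_le_greatestFib n.add_one_ne_zero
  have hFg : F ((g - 2 : ℕ) : ℤ) = Nat.fib g := by rw [F_natCast_s5, Nat.sub_add_cancel h2]
  have hle : Nat.fib g ≤ n + 1 := Nat.fib_greatestFib_le _
  have hlt : n + 1 < Nat.fib (g - 1) + Nat.fib g :=
    Nat.fib_add_one (n := g) (by omega) ▸ Nat.lt_fib_greatestFib_add_one _
  have hr := ih (n + 1 - Nat.fib g) (Nat.sub_lt n.succ_pos (Nat.fib_pos.2 (by omega)))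
  rw [hFg, sum_insert, hr, hFg]
  · omega
  -- a digit `g - 2` of the remainder would give `2 * fib g ≤ n + 1 < fib (g + 1)`
  intro hg
  have := single_le_sum (f := fun j : ℕ => F j) (fun _ _ => Nat.zero_le _) hg
  rw [hr, hFg] at this
  have := Nat.fib_mono (Nat.sub_le g 1)
  omega

lemma phi_pos : 0 < phi := Real.goldenRatio_pos

lemma one_lt_phi : 1 < phi := Real.one_lt_goldenRatio

lemma phi_pow_add_two (i : ℕ) : phi ^ (i + 2) = phi ^ i + phi ^ (i + 1) := by
  have := Real.goldenRatio_pow_sub_goldenRatio_pow i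
  unfold phi
  linarith

lemma zbar_sum_F (S : Finset ℕ) : zbar (∑ j ∈ S, F j) = ∑ j ∈ S, phi ^ j := by
  obtain ⟨T, hT, hsum⟩ := exists_nonconsecutive_sum_eq S
  have hF : ∑ j ∈ T, F j = ∑ j ∈ S, F j := by
    exact_mod_cast hsum (fun j => (F j : ℝ)) fun i => by exact_mod_cast F_add_two i
  rw [← hF, zbar, zeckSet_sum_F hT]
  exact hsum (phi ^ ·) phi_pow_add_two

lemma zbar_zshift_add_sum_F (n : ℕ) (k : ℤ) (T : Finset ℕ)
    (h : ∀ j ∈ zeckSet n, 0 ≤ (j : ℤ) + k ∧ ∀ i ∈ T, (i : ℤ) ≠ j + k) :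
    zbar (zshift n k + ∑ i ∈ T, F i) = phi ^ k * zbar n + ∑ i ∈ T, phi ^ i := by
  set g : ℕ → ℕ := fun j => ((j : ℤ) + k).toNat
  have hg (j : ℕ) (hj : j ∈ zeckSet n) : (g j : ℤ) = j + k := Int.toNat_of_nonneg (h j hj).1
  have hinj : Set.InjOn g (zeckSet n) := fun i hi j hj hij => by
    have := hg i hi
    have := hg j hj
    omega
  have hdisj : Disjoint ((zeckSet n).image g) T := by
    refine disjoint_left.2 fun i hi hiT => ?_
    obtain ⟨j, hj, rfl⟩ := mem_image.1 hi
    exact (h j hj).2 _ hiT (hg j hj)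
  have hshift : zshift n k = ∑ i ∈ (zeckSet n).image g, F i := by
    rw [sum_image hinj, zshift]
    exact sum_congr rfl fun j hj => by rw [hg j hj]
  rw [hshift, ← sum_union hdisj, zbar_sum_F, sum_union hdisj, sum_image hinj, zbar, mul_sum]
  congr 1
  refine sum_congr rfl fun j hj => ?_
  rw [← zpow_natCast, hg j hj, zpow_add₀ phi_pos.ne', mul_comm]
  rfl

lemma zshift_zero (n : ℕ) : zshift n 0 = n := by
  simpa [zshift] using sum_zeckSet_F n

section Digits

variable {a : ℕ}

lemma zbar_add_of_two_le_digits (hd : ∀ j ∈ zeckSet a, 2 ≤ j) :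
    zbar (a + 1) = zbar a + 1 ∧ zbar (a + 2) = zbar a + phi ∧
      zbar (zshift a 1) = phi * zbar a ∧ zbar (zshift a 1 + 1) = phi * zbar a + 1 ∧
      zbar (zshift a 1 + 2) = phi * zbar a + phi ∧
      zbar (zshift a 1 + 3) = phi * zbar a + phi ^ 2 := by
  have value (k : ℤ) (T : Finset ℕ)
      (hT : ∀ j : ℕ, 2 ≤ j → 0 ≤ (j : ℤ) + k ∧ ∀ i ∈ T, (i : ℤ) ≠ j + k) :=
    zbar_zshift_add_sum_F a k T fun j hj => hT j (hd j hj)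
  have ea1 := value 0 {0} fun j hj => ⟨by omega, by simp; omega⟩
  have ea2 := value 0 {1} fun j hj => ⟨by omega, by simp; omega⟩
  have eb0 := value 1 ∅ fun j hj => ⟨by omega, by simp⟩
  have eb1 := value 1 {0} fun j hj => ⟨by omega, by simp; omega⟩
  have eb2 := value 1 {1} fun j hj => ⟨by omega, by simp; omega⟩
  have eb3 := value 1 {2} fun j hj => ⟨by omega, by simp; omega⟩
  norm_num [zshift_zero, F_natCast_s5] at ea1 ea2 eb0 eb1 eb2 eb3
  exact ⟨ea1, ea2, eb0, eb1, eb2, eb3⟩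

lemma zbar_add_of_three_le_digits (hd : ∀ j ∈ zeckSet a, 3 ≤ j) :
    zbar (a + 3) = zbar a + phi ^ 2 ∧
      zbar (zshift a 1 + 4) = phi * zbar a + (1 + phi ^ 2) ∧
      zbar (zshift a 1 + 5) = phi * zbar a + phi ^ 3 ∧
      zbar (zshift a (-1) + 1) = phi⁻¹ * zbar a + 1 ∧
      zbar (zshift a (-1) + 2) = phi⁻¹ * zbar a + phi := by
  have value (k : ℤ) (T : Finset ℕ)
      (hT : ∀ j : ℕ, 3 ≤ j → 0 ≤ (j : ℤ) + k ∧ ∀ i ∈ T, (i : ℤ) ≠ j + k) :=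
    zbar_zshift_add_sum_F a k T fun j hj => hT j (hd j hj)
  have ea3 := value 0 {2} fun j hj => ⟨by omega, by simp; omega⟩
  have eb4 := value 1 {0, 2} fun j hj => ⟨by omega, by simp; omega⟩
  have eb5 := value 1 {3} fun j hj => ⟨by omega, by simp; omega⟩
  have ec1 := value (-1) {0} fun j hj => ⟨by omega, by simp; omega⟩
  have ec2 := value (-1) {1} fun j hj => ⟨by omega, by simp; omega⟩
  norm_num [zshift_zero, F_natCast_s5] at ea3 eb4 eb5 ec1 ec2
  exact ⟨ea3, eb4, eb5, ec1, ec2⟩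

end Digits

lemma Ico_div_union_Ico_div {c u v w : ℝ} (hc : 0 < c) (huv : u ≤ v) (hvw : v ≤ w) :
    Set.Ico (u / c) (v / c) ∪ Set.Ico (v / c) (w / c) = Set.Ico (u / c) (w / c) :=
  Set.Ico_union_Ico_eq_Ico (div_le_div_of_nonneg_right huv hc.le)
    (div_le_div_of_nonneg_right hvw hc.le)

theorem statement5_general (m a : ℕ)
    (h0 : 0 ∉ zeckSet a) (h1 : 1 ∉ zeckSet a) :
    (Set.Ico (zbar a / phi ^ (m : ℤ)) (zbar (a + 1) / phi ^ (m : ℤ)) =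
        Set.Ico (zbar (zshift a 1) / phi ^ ((m : ℤ) + 1))
            (zbar (zshift a 1 + 1) / phi ^ ((m : ℤ) + 1)) ∪
          Set.Ico (zbar (zshift a 1 + 1) / phi ^ ((m : ℤ) + 1))
            (zbar (zshift a 1 + 2) / phi ^ ((m : ℤ) + 1))) ∧
    (Set.Ico (zbar (a + 1) / phi ^ (m : ℤ)) (zbar (a + 2) / phi ^ (m : ℤ)) =
        Set.Ico (zbar (zshift a 1 + 2) / phi ^ ((m : ℤ) + 1))
          (zbar (zshift a 1 + 3) / phi ^ ((m : ℤ) + 1))) ∧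
    (2 ∉ zeckSet a → a + 3 ≤ F m →
      Set.Ico (zbar (a + 2) / phi ^ (m : ℤ)) (zbar (a + 3) / phi ^ (m : ℤ)) =
          Set.Ico (zbar (zshift a (-1) + 1) / phi ^ ((m : ℤ) - 1))
            (zbar (zshift a (-1) + 2) / phi ^ ((m : ℤ) - 1)) ∧
      Set.Ico (zbar (a + 2) / phi ^ (m : ℤ)) (zbar (a + 3) / phi ^ (m : ℤ)) =
          Set.Ico (zbar (zshift a 1 + 3) / phi ^ ((m : ℤ) + 1))
              (zbar (zshift a 1 + 4) / phi ^ ((m : ℤ) + 1)) ∪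
            Set.Ico (zbar (zshift a 1 + 4) / phi ^ ((m : ℤ) + 1))
              (zbar (zshift a 1 + 5) / phi ^ ((m : ℤ) + 1))) := by
  have hφ : phi ≠ 0 := phi_pos.ne'
  have hsucc : phi ^ ((m : ℤ) + 1) = phi ^ (m : ℤ) * phi := zpow_add_one₀ hφ _
  have hP1 : 0 < phi ^ ((m : ℤ) + 1) := zpow_pos phi_pos _
  have hd : ∀ j ∈ zeckSet a, 2 ≤ j := fun j hj => by
    by_contra
    interval_cases j <;> contradiction
  obtain ⟨ea1, ea2, eb0, eb1, eb2, eb3⟩ := zbar_add_of_two_le_digits hd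
  refine ⟨?_, ?_, fun h2 _ => ?_⟩
  · rw [Ico_div_union_Ico_div hP1 (by linarith) (by linarith [one_lt_phi]), eb0, eb2, ea1, hsucc]
    congr 1 <;> field_simp
  · rw [eb2, eb3, ea1, ea2, hsucc]
    congr 1 <;> field_simp
  have hd3 : ∀ j ∈ zeckSet a, 3 ≤ j := fun j hj => by
    obtain rfl | h := (hd j hj).eq_or_lt
    · exact absurd hj h2
    · exact h
  obtain ⟨ea3, eb4, eb5, ec1, ec2⟩ := zbar_add_of_three_le_digits hd3
  refine ⟨?_, ?_⟩
  · rw [ea2, ea3, ec1, ec2, zpow_sub_one₀ hφ]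
    congr 1 <;> field_simp
  · have hcube : phi ^ 3 = phi + phi ^ 2 := by simpa using phi_pow_add_two 1
    rw [Ico_div_union_Ico_div hP1 (by linarith) (by linarith [one_lt_phi]), eb3, eb5, ea2, ea3,
      hsucc]
    congr 1 <;> field_simp

/-- Refinement identities for the elementary intervals, as subsets of ℝ:
(i) `I_0(a;m) = I_0(a⊙φ; m+1) ∪ I_1(a⊙φ; m+1)`;
(ii) `I_1(a;m) = I_2(a⊙φ; m+1)`;
(iii) if `d_2 = 0` and `a+3 ≤ F^m`, then
`I_2(a;m) = I_1(a⊙φ^(−1); m−1) = I_0(a⊙φ+3; m+1) ∪ I_1(a⊙φ+3; m+1)`. -/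
theorem statement5 (m a : ℕ) (ha : a < F m)
    (h0 : 0 ∉ zeckSet a) (h1 : 1 ∉ zeckSet a) :
    (Set.Ico (zbar a / phi ^ (m : ℤ)) (zbar (a + 1) / phi ^ (m : ℤ)) =
        Set.Ico (zbar (zshift a 1) / phi ^ ((m : ℤ) + 1))
            (zbar (zshift a 1 + 1) / phi ^ ((m : ℤ) + 1)) ∪
          Set.Ico (zbar (zshift a 1 + 1) / phi ^ ((m : ℤ) + 1))
            (zbar (zshift a 1 + 2) / phi ^ ((m : ℤ) + 1))) ∧
    (Set.Ico (zbar (a + 1) / phi ^ (m : ℤ)) (zbar (a + 2) / phi ^ (m : ℤ)) =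
        Set.Ico (zbar (zshift a 1 + 2) / phi ^ ((m : ℤ) + 1))
          (zbar (zshift a 1 + 3) / phi ^ ((m : ℤ) + 1))) ∧
    (2 ∉ zeckSet a → a + 3 ≤ F m →
      Set.Ico (zbar (a + 2) / phi ^ (m : ℤ)) (zbar (a + 3) / phi ^ (m : ℤ)) =
          Set.Ico (zbar (zshift a (-1) + 1) / phi ^ ((m : ℤ) - 1))
            (zbar (zshift a (-1) + 2) / phi ^ ((m : ℤ) - 1)) ∧
      Set.Ico (zbar (a + 2) / phi ^ (m : ℤ)) (zbar (a + 3) / phi ^ (m : ℤ)) =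
          Set.Ico (zbar (zshift a 1 + 3) / phi ^ ((m : ℤ) + 1))
              (zbar (zshift a 1 + 4) / phi ^ ((m : ℤ) + 1)) ∪
            Set.Ico (zbar (zshift a 1 + 4) / phi ^ ((m : ℤ) + 1))
              (zbar (zshift a 1 + 5) / phi ^ ((m : ℤ) + 1))) :=
  statement5_general m a h0 h1
end
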